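/- Let K and L be locally finitely presentable categories and U: K → L a full embedding such that a morphism h of K is a pure monomorphism if and only if Uh is a regular monomorphism in L, and such that every regular injective object of L lies (up to isomorphism) in the image of U. If L has enough regular injectives, then K has enough pure injectives: every object of K admits a pure monomorphism into a pure injective object. -/

import Mathlib

open CategoryTheory Limits Opposite

universe w v u u₂

namespace PureGen

variable {C : Type u} [Category.{v} C]

/-- An object is finitely presentable if its hom-functor preserves directed colimits
(colimits indexed by nonempty directed posets). -/
def IsFinitelyPresentableObj (X : C) : Prop :=
  ∀ (J : Type w) (_ : Preorder J) (_ : IsDirected J (· ≤ ·)) (_ : Nonempty J),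
    PreservesColimitsOfShape J (coyoneda.obj (op X))

/-- A cocomplete category is locally finitely presentable if there is, up to isomorphism,
a set of finitely presentable objects such that every object is a directed colimit of
objects from that set. -/
def IsLocallyFinitelyPresentable (C : Type u) [Category.{v} C] : Prop :=
  HasColimits C ∧
  ∃ (ι : Type v) (A : ι → C),
    (∀ i, IsFinitelyPresentableObj.{v} (A i)) ∧
    ∀ X : C, ∃ (J : Type v) (_ : Preorder J) (_ : IsDirected J (· ≤ ·)) (_ : Nonempty J)
      (D : J ⥤ C) (c : Cocone D), Nonempty (IsColimit c) ∧ c.pt = X ∧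
        ∀ j : J, ∃ i : ι, Nonempty (D.obj j ≅ A i)

/-- The class of pure monomorphisms: `h : K ⟶ L` is pure if in every commutative square
over a morphism `f : M ⟶ N` with `M`, `N` finitely presentable, `u` factors through `f`. -/
def pureMonomorphisms (C : Type u) [Category.{v} C] : MorphismProperty C :=
  fun K _L h => ∀ ⦃M N : C⦄ (f : M ⟶ N) (u : M ⟶ K) (v : N ⟶ _L),
    IsFinitelyPresentableObj.{v} M → IsFinitelyPresentableObj.{v} N →
    u ≫ h = f ≫ v → ∃ g : N ⟶ K, f ≫ g = u

/-- An object is pure injective if it is injective with respect to all pure monomorphisms. -/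
def IsPureInjective (Q : C) : Prop :=
  ∀ ⦃M N : C⦄ (h : M ⟶ N), pureMonomorphisms C h → ∀ f : M ⟶ Q, ∃ g : N ⟶ Q, h ≫ g = f

section Transfinite

variable {J : Type w} [Preorder J]

/-- The inclusion functor of the initial segment below `j`. -/
def iioFunctor (j : J) : Set.Iio j ⥤ J :=
  Monotone.functor (f := (Subtype.val : Set.Iio j → J)) (fun _ _ h => h)

/-- The cocone on the restriction of a chain to the initial segment below `j`,
with apex `F.obj j`. -/
@[simps]
def coconeLT (F : J ⥤ C) (j : J) : Cocone (iioFunctor j ⋙ F) where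
  pt := F.obj j
  ι :=
    { app := fun i => F.map (homOfLE i.2.le)
      naturality := fun i i' f => by
        dsimp [iioFunctor, Monotone.functor]
        rw [← F.map_comp, Category.comp_id]
        rfl }

end Transfinite

/-- `f` is a retract of `f'` in the arrow category. -/
def IsRetractOfArrow {X Y X' Y' : C} (f : X ⟶ Y) (f' : X' ⟶ Y') : Prop :=
  ∃ (i : Arrow.mk f ⟶ Arrow.mk f') (r : Arrow.mk f' ⟶ Arrow.mk f), i ≫ r = 𝟙 _

/-- A class of morphisms is cofibrantly closed if it is closed under pushouts,
transfinite compositions, and retracts in the arrow category. -/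
structure IsCofibrantlyClosed (W : MorphismProperty C) : Prop where
  pushout : ∀ ⦃A B A' B' : C⦄ (f : A ⟶ B) (g : A ⟶ A') (f' : A' ⟶ B') (g' : B ⟶ B'),
    IsPushout g f f' g' → W f → W f'
  transfinite : ∀ (J : Type v) (_ : LinearOrder J) (_ : OrderBot J) (_ : SuccOrder J)
    (_ : WellFoundedLT J) (F : J ⥤ C) (c : Cocone F), IsColimit c →
    (∀ j : J, Order.IsSuccLimit j → Nonempty (IsColimit (coconeLT F j))) →
    (∀ j : J, ¬ IsMax j → W (F.map (homOfLE (Order.le_succ j)))) →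
    W (c.ι.app ⊥)
  retract : ∀ ⦃X Y X' Y' : C⦄ (f : X ⟶ Y) (f' : X' ⟶ Y'),
    IsRetractOfArrow f f' → W f' → W f

/-- A class of morphisms is cofibrantly generated if it is the smallest cofibrantly
closed class containing some set of morphisms. -/
def IsCofibrantlyGenerated (W : MorphismProperty C) : Prop :=
  ∃ (ι : Type v) (A B : ι → C) (x : ∀ i, A i ⟶ B i),
    IsCofibrantlyClosed W ∧ (∀ i, W (x i)) ∧
    ∀ W' : MorphismProperty C, IsCofibrantlyClosed W' → (∀ i, W' (x i)) → W ≤ W'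

end PureGen

namespace PureGen

open CategoryTheory Limits

/-- The class of regular monomorphisms (equalizers of some pair of morphisms). -/
def regularMonomorphisms (D : Type u) [Category.{v} D] : MorphismProperty D :=
  fun _ _ f => Nonempty (RegularMono f)

/-- An object is regular injective if it is injective with respect to all regular
monomorphisms. -/
def IsRegularInjective {D : Type u} [Category.{v} D] (Q : D) : Prop :=
  ∀ ⦃M N : D⦄ (h : M ⟶ N), regularMonomorphisms D h → ∀ f : M ⟶ Q, ∃ g : N ⟶ Q, h ≫ g = f

/-- A category has enough regular injectives if every object admits a regular
monomorphism into a regular injective object. -/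
def HasEnoughRegularInjectives (D : Type u) [Category.{v} D] : Prop :=
  ∀ X : D, ∃ (Q : D) (h : X ⟶ Q), regularMonomorphisms D h ∧ IsRegularInjective Q

end PureGen


open CategoryTheory Limits in
def PureGen.regularMonoCompIso {C : Type*} [Category C] {X Y Z : C} (f : X ⟶ Y)
    (h : RegularMono f) (e : Z ≅ Y) : RegularMono (f ≫ e.inv) where
  Z := h.Z
  left := e.hom ≫ h.left
  right := e.hom ≫ h.right
  w := by simp [h.w]
  isLimit := Fork.IsLimit.mk' _ (fun s => by
    have hw : (s.ι ≫ e.hom) ≫ h.left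
        = (s.ι ≫ e.hom) ≫ h.right := by
      simpa using s.condition
    obtain ⟨l, hl⟩ := h.lift' (s.ι ≫ e.hom) hw
    refine ⟨l, by simp [reassoc_of% hl], ?_⟩
    intro m hm
    have := h.mono
    have : Mono (f ≫ e.inv) := mono_comp _ _
    rw [← cancel_mono (f ≫ e.inv)]
    have hm' : m ≫ f ≫ e.inv = s.ι := hm
    rw [hm']
    simp [reassoc_of% hl])

open PureGen CategoryTheory Limits in
/-- Let K and L be locally finitely presentable categories and U : K ⥤ L a full embedding
such that a morphism h of K is pure iff U.map h is a regular monomorphism, and every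
regular injective of L is isomorphic to an object in the image of U.  If L has enough
regular injectives, then K has enough pure injectives. -/
theorem hasEnoughPureInjectives_of_hasEnoughRegularInjectives
    (K : Type u) [Category.{v} K] (L : Type u₂) [Category.{v} L]
    (hK : PureGen.IsLocallyFinitelyPresentable K) (hL : PureGen.IsLocallyFinitelyPresentable L)
    (U : K ⥤ L) [U.Full] [U.Faithful]
    (hpure : ∀ ⦃X Y : K⦄ (h : X ⟶ Y),
      pureMonomorphisms K h ↔ regularMonomorphisms L (U.map h))
    (himg : ∀ Q : L, IsRegularInjective Q → ∃ X : K, Nonempty (U.obj X ≅ Q))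
    (henough : HasEnoughRegularInjectives L) :
    ∀ X : K, ∃ (Q : K) (h : X ⟶ Q), pureMonomorphisms K h ∧ IsPureInjective Q := by
  intro X
  obtain ⟨Q', h', hreg, hinj⟩ := henough (U.obj X)
  obtain ⟨Q, ⟨e⟩⟩ := himg Q' hinj
  have hregm : RegularMono h' := hreg.some
  refine ⟨Q, U.preimage (h' ≫ e.inv), ?_, ?_⟩
  · rw [hpure, U.map_preimage]
    exact ⟨PureGen.regularMonoCompIso h' hregm e⟩
  · intro M N m hm f
    have hregm' : regularMonomorphisms L (U.map m) := (hpure m).mp hm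
    obtain ⟨g', hg'⟩ := hinj (U.map m) hregm' (U.map f ≫ e.hom)
    refine ⟨U.preimage (g' ≫ e.inv), U.map_injective ?_⟩
    rw [U.map_comp, U.map_preimage, ← Category.assoc, hg']
    simp
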